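/- The upper-left-half index set S = {(r,d) : 1 ≤ d ≤ ⌊(n+2)/3⌋, 2d−1 ≤ r ≤ ⌊(n+d)/2⌋} is mapped into the full triangle index set {(r,d) : 1 ≤ d ≤ r ≤ n} by the identity, i.e., every (r,d) ∈ S satisfies 1 ≤ d ≤ r ≤ n, and moreover the orbit of S under the group generated by the vertical map τ(r,d) = (r, r+1−d) and rotational map σ(r,d) = (n+d−r, n+1−r) covers the whole index set {(r,d) : 1 ≤ d ≤ r ≤ n}. -/
import Mathlib


theorem upper_left_half_covers (n : ℕ) :
    let T : Set (ℤ × ℤ) := {p | 1 ≤ p.2 ∧ p.2 ≤ p.1 ∧ p.1 ≤ (n : ℤ)}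
    let S : Set (ℤ × ℤ) := {p | 1 ≤ p.2 ∧ p.2 ≤ ((n : ℤ) + 2) / 3 ∧
        2 * p.2 - 1 ≤ p.1 ∧ p.1 ≤ ((n : ℤ) + p.2) / 2}
    let σ : ℤ × ℤ → ℤ × ℤ := fun p => ((n : ℤ) + p.2 - p.1, (n : ℤ) + 1 - p.1)
    let τ : ℤ × ℤ → ℤ × ℤ := fun p => (p.1, p.1 + 1 - p.2)
    S ⊆ T ∧
    ∀ p ∈ T, ∃ q ∈ S, p = q ∨ p = σ q ∨ p = σ (σ q) ∨
      p = τ q ∨ p = σ (τ q) ∨ p = σ (σ (τ q)) := by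
  intro T S σ τ
  have hS : ∀ a b : ℤ, (1 ≤ b ∧ b ≤ ((n : ℤ) + 2) / 3 ∧
      2 * b - 1 ≤ a ∧ a ≤ ((n : ℤ) + b) / 2) → ((a, b) : ℤ × ℤ) ∈ S := by
    intro a b h; exact h
  constructor
  · rintro ⟨r, d⟩ ⟨h1, h2, h3, h4⟩
    refine ⟨h1, by omega, by omega⟩
  · rintro ⟨r, d⟩ ⟨h1, h2, h3⟩
    have key :
        (1 ≤ d ∧ d ≤ ((n : ℤ) + 2) / 3 ∧ 2 * d - 1 ≤ r ∧ r ≤ ((n : ℤ) + d) / 2) ∨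
        (1 ≤ r - d + 1 ∧ r - d + 1 ≤ ((n : ℤ) + 2) / 3 ∧
          2 * (r - d + 1) - 1 ≤ (n : ℤ) + 1 - d ∧
          (n : ℤ) + 1 - d ≤ ((n : ℤ) + (r - d + 1)) / 2) ∨
        (1 ≤ (n : ℤ) + 1 - r ∧ (n : ℤ) + 1 - r ≤ ((n : ℤ) + 2) / 3 ∧
          2 * ((n : ℤ) + 1 - r) - 1 ≤ (n : ℤ) + d - r ∧
          (n : ℤ) + d - r ≤ ((n : ℤ) + ((n : ℤ) + 1 - r)) / 2) ∨
        (1 ≤ r + 1 - d ∧ r + 1 - d ≤ ((n : ℤ) + 2) / 3 ∧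
          2 * (r + 1 - d) - 1 ≤ r ∧ r ≤ ((n : ℤ) + (r + 1 - d)) / 2) ∨
        (1 ≤ (n : ℤ) + 1 - r ∧ (n : ℤ) + 1 - r ≤ ((n : ℤ) + 2) / 3 ∧
          2 * ((n : ℤ) + 1 - r) - 1 ≤ (n : ℤ) + 1 - d ∧
          (n : ℤ) + 1 - d ≤ ((n : ℤ) + ((n : ℤ) + 1 - r)) / 2) ∨
        (1 ≤ d ∧ d ≤ ((n : ℤ) + 2) / 3 ∧ 2 * d - 1 ≤ (n : ℤ) + d - r ∧
          (n : ℤ) + d - r ≤ ((n : ℤ) + d) / 2) := by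
      omega
    rcases key with h | h | h | h | h | h
    · exact ⟨(r, d), hS _ _ h, Or.inl rfl⟩
    · refine ⟨((n : ℤ) + 1 - d, r - d + 1), hS _ _ h, Or.inr (Or.inl ?_)⟩
      show (r, d) = ((n : ℤ) + (r - d + 1) - ((n : ℤ) + 1 - d), (n : ℤ) + 1 - ((n : ℤ) + 1 - d))
      rw [Prod.mk.injEq]; omega
    · refine ⟨((n : ℤ) + d - r, (n : ℤ) + 1 - r), hS _ _ h,
        Or.inr (Or.inr (Or.inl ?_))⟩
      show ((r : ℤ), d) = σ (σ ((n : ℤ) + d - r, (n : ℤ) + 1 - r))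
      simp only [σ]
      rw [Prod.mk.injEq]; omega
    · refine ⟨(r, r + 1 - d), hS _ _ h,
        Or.inr (Or.inr (Or.inr (Or.inl ?_)))⟩
      show ((r : ℤ), d) = τ (r, r + 1 - d)
      simp only [τ]
      rw [Prod.mk.injEq]; omega
    · refine ⟨((n : ℤ) + 1 - d, (n : ℤ) + 1 - r), hS _ _ h,
        Or.inr (Or.inr (Or.inr (Or.inr (Or.inl ?_))))⟩
      show ((r : ℤ), d) = σ (τ ((n : ℤ) + 1 - d, (n : ℤ) + 1 - r))
      simp only [σ, τ]
      rw [Prod.mk.injEq]; omega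
    · refine ⟨((n : ℤ) + d - r, d), hS _ _ h,
        Or.inr (Or.inr (Or.inr (Or.inr (Or.inr ?_))))⟩
      show ((r : ℤ), d) = σ (σ (τ ((n : ℤ) + d - r, d)))
      simp only [σ, τ]
      rw [Prod.mk.injEq]; omega
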